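/- Let V be a Euclidean space of dimension d ≥ 2 and r ≥ ε > 0. If g ∈ GL(V) is (r,ε)-proximal in ℙ(V), then μ₁(g) − |log(2r²)| ≤ λ₁(g) ≤ μ₁(g), where λ₁(g) = log(spectral radius of g) and μ₁(g) = log(operator norm of g). -/

import Mathlib

/-!
Let `v` span the attracting point `x⁺`, so that `g v = c • v`, and let `n` be a unit normal of
the repelling hyperplane `X⁻`. The sine-distance from `[a]` to `X⁻` is `|⟪n, a⟫| / ‖a‖`, so the
separation hypothesis gives `|⟪n, v⟫| ≥ 2r‖v‖`, and for `w ∈ X⁻` and small `t > 0` the point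
`[v + t w]` lies in the region where `g` is `ε`-Lipschitz. Comparing the distances from
`g[v + t w] = [c v + t g w]` and `[v + t w]` to `g[v] = [v]` and letting `t → 0` gives
`2r‖g w‖ ≤ ε|c|‖w‖` on `X⁻`. Splitting any vector along `ℝ v ⊕ X⁻` then bounds
`‖g‖ ≤ |c| / (2r²)`, while `|c|ⁿ ≤ ‖gⁿ‖ ≤ ‖g‖ⁿ` gives `log |c| ≤ λ₁(g) ≤ μ₁(g)`.
-/

/-- The angle metric `d([v],[w]) = sin ∠(v,w)` on real projective space. -/
noncomputable def dproj {d : ℕ}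
    (x y : Projectivization ℝ (EuclideanSpace ℝ (Fin d))) : ℝ :=
  Real.sqrt (1 - ((inner ℝ x.rep y.rep : ℝ) / (‖x.rep‖ * ‖y.rep‖)) ^ 2)

/-- The projective action of an invertible linear map. -/
noncomputable def projAct {d : ℕ}
    (g : EuclideanSpace ℝ (Fin d) ≃L[ℝ] EuclideanSpace ℝ (Fin d)) :
    Projectivization ℝ (EuclideanSpace ℝ (Fin d)) →
      Projectivization ℝ (EuclideanSpace ℝ (Fin d)) :=
  Projectivization.map (g.toLinearEquiv : EuclideanSpace ℝ (Fin d) →ₗ[ℝ] EuclideanSpace ℝ (Fin d))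
    g.toLinearEquiv.injective

/-- `μ₁(g)`: the logarithm of the operator norm (first singular value). -/
noncomputable def mu1 {d : ℕ}
    (g : EuclideanSpace ℝ (Fin d) ≃L[ℝ] EuclideanSpace ℝ (Fin d)) : ℝ :=
  Real.log ‖(g : EuclideanSpace ℝ (Fin d) →L[ℝ] EuclideanSpace ℝ (Fin d))‖

/-- `λ₁(g)`: the logarithm of the spectral radius, via the Gelfand formula
`λ₁(g) = lim (1/n) log ‖gⁿ‖`. -/
noncomputable def lambda1 {d : ℕ}
    (g : EuclideanSpace ℝ (Fin d) ≃L[ℝ] EuclideanSpace ℝ (Fin d)) : ℝ :=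
  Filter.atTop.liminf (fun n : ℕ =>
    Real.log ‖((g ^ n : EuclideanSpace ℝ (Fin d) ≃L[ℝ] EuclideanSpace ℝ (Fin d)) :
      EuclideanSpace ℝ (Fin d) →L[ℝ] EuclideanSpace ℝ (Fin d))‖ / n)

open Real InnerProductGeometry Filter Topology
open scoped RealInnerProductSpace

section NormedSpace

lemma ContinuousLinearEquiv.coe_pow {R M : Type*} [Semiring R] [TopologicalSpace M]
    [AddCommMonoid M] [Module R M] (g : M ≃L[R] M) (n : ℕ) :
    ((g ^ n : M ≃L[R] M) : M →L[R] M) = (g : M →L[R] M) ^ n := by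
  induction n with
  | zero => rfl
  | succ n ih => rw [pow_succ, pow_succ, ← ih]; rfl

variable {F : Type*} [NormedAddCommGroup F] [NormedSpace ℝ F]

lemma pow_apply_eq_pow_smul {T : F →L[ℝ] F} {v : F} {c : ℝ} (hTv : T v = c • v) (n : ℕ) :
    (T ^ n) v = c ^ n • v := by
  induction n with
  | zero => simp
  | succ n ih =>
    rw [pow_succ]
    change (T ^ n) (T v) = _
    rw [hTv, map_smul, ih, smul_smul, pow_succ']

lemma abs_le_opNorm_of_apply_eq_smul {T : F →L[ℝ] F} {v : F} {c : ℝ} (hv : v ≠ 0)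
    (hTv : T v = c • v) : |c| ≤ ‖T‖ := by
  have := T.le_opNorm v
  rw [hTv, norm_smul, Real.norm_eq_abs] at this
  exact le_of_mul_le_mul_right this (norm_pos_iff.2 hv)

end NormedSpace

lemma liminf_mem_Icc_of_eventually_mem {ι : Type*} {l : Filter ι} [l.NeBot] {u : ι → ℝ}
    {a b : ℝ} (h : ∀ᶠ i in l, u i ∈ Set.Icc a b) : liminf u l ∈ Set.Icc a b := by
  have hlow : ∀ᶠ i in l, a ≤ u i := h.mono fun _ hi => hi.1
  have hup : ∀ᶠ i in l, u i ≤ b := h.mono fun _ hi => hi.2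
  refine ⟨le_liminf_of_le (isCoboundedUnder_ge_of_eventually_le _ hup) hlow,
    liminf_le_of_le (isBoundedUnder_of_eventually_ge hlow) fun c hc => ?_⟩
  obtain ⟨i, hci, hib⟩ := (hc.and hup).exists
  exact hci.trans hib

section InnerProductSpace

variable {E : Type*} [NormedAddCommGroup E] [InnerProductSpace ℝ E]

lemma sin_angle_smul_left {s : ℝ} (hs : s ≠ 0) (x y : E) :
    sin (angle (s • x) y) = sin (angle x y) := by
  rcases hs.lt_or_gt with hs | hs
  · rw [angle_smul_left_of_neg x y hs, angle_neg_left, sin_pi_sub]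
  · rw [angle_smul_left_of_pos x y hs]

lemma sin_angle_smul_right {s : ℝ} (hs : s ≠ 0) (x y : E) :
    sin (angle x (s • y)) = sin (angle x y) := by
  rw [angle_comm, sin_angle_smul_left hs, angle_comm]

lemma sin_angle_add_smul_mul_norm (x v : E) (s : ℝ) :
    sin (angle (x + s • v) v) * ‖x + s • v‖ = sin (angle x v) * ‖x‖ := by
  rcases eq_or_ne v 0 with rfl | hv
  · simp
  refine mul_right_cancel₀ (norm_ne_zero_iff.2 hv) ?_
  rw [mul_assoc, mul_assoc, sin_angle_mul_norm_mul_norm, sin_angle_mul_norm_mul_norm]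
  congr 1
  simp only [inner_add_left, inner_add_right, real_inner_smul_left, real_inner_smul_right,
    real_inner_comm x v]
  ring

lemma norm_sub_inner_smul_sq {n : E} (hn : ‖n‖ = 1) (a : E) :
    ‖a - ⟪n, a⟫ • n‖ ^ 2 = ‖a‖ ^ 2 - ⟪n, a⟫ ^ 2 := by
  rw [norm_sub_sq_real, real_inner_smul_right, norm_smul, hn, real_inner_comm, Real.norm_eq_abs,
    mul_one, sq_abs]
  ring

lemma abs_inner_le_sin_angle_mul_norm {n z : E} (hn : ‖n‖ = 1) (hz : ⟪n, z⟫ = 0) (hz0 : z ≠ 0)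
    (a : E) : |⟪n, a⟫| ≤ sin (angle a z) * ‖a‖ := by
  have hinner : ⟪a, z⟫ = ⟪a - ⟪n, a⟫ • n, z⟫ := by
    rw [inner_sub_left, real_inner_smul_left, hz, mul_zero, sub_zero]
  have hcs := pow_le_pow_left₀ (abs_nonneg _) (abs_real_inner_le_norm (a - ⟪n, a⟫ • n) z) 2
  rw [sq_abs, mul_pow, norm_sub_inner_smul_sq hn, ← hinner] at hcs
  refine le_of_mul_le_mul_right ?_ (norm_pos_iff.2 hz0)
  rw [mul_assoc, sin_angle_mul_norm_mul_norm, ← Real.sqrt_sq (by positivity : 0 ≤ |⟪n, a⟫| * ‖z‖)]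
  apply Real.sqrt_le_sqrt
  rw [real_inner_self_eq_norm_sq, real_inner_self_eq_norm_sq, mul_pow, sq_abs]
  nlinarith

lemma exists_sin_angle_mul_norm_eq {n z₀ : E} (hn : ‖n‖ = 1) (hz₀ : ⟪n, z₀⟫ = 0) (hz₀0 : z₀ ≠ 0)
    (a : E) : ∃ z, z ≠ 0 ∧ ⟪n, z⟫ = 0 ∧ sin (angle a z) * ‖a‖ = |⟪n, a⟫| := by
  have hnn : ⟪n, n⟫ = 1 := by rw [real_inner_self_eq_norm_sq, hn, one_pow]
  have hp : ⟪n, a - ⟪n, a⟫ • n⟫ = 0 := by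
    rw [inner_sub_right, real_inner_smul_right, hnn, mul_one, sub_self]
  have hq : ‖⟪n, a⟫ • n‖ = |⟪n, a⟫| := by rw [norm_smul, hn, mul_one, Real.norm_eq_abs]
  by_cases hp0 : a - ⟪n, a⟫ • n = 0
  · rw [sub_eq_zero] at hp0
    refine ⟨z₀, hz₀0, hz₀, ?_⟩
    have haz : ⟪a, z₀⟫ = 0 := by rw [hp0, real_inner_smul_left, hz₀, mul_zero]
    rw [(inner_eq_zero_iff_angle_eq_pi_div_two _ _).1 haz, sin_pi_div_two, one_mul, ← hq, ← hp0]
  · refine ⟨_, hp0, hp, ?_⟩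
    have horth : ⟪a - ⟪n, a⟫ • n, ⟪n, a⟫ • n⟫ = 0 := by
      rw [real_inner_smul_right, real_inner_comm n, hp, mul_zero]
    have := sin_angle_add_mul_norm_of_inner_eq_zero horth
    rwa [sub_add_cancel, hq, angle_comm] at this

lemma mul_norm_apply_le_of_sin_angle_le {T : E →ₗ[ℝ] E} {v w : E} {c r ε : ℝ} (hε : 0 ≤ ε)
    (hv : v ≠ 0) (hTv : T v = c • v)
    (hsep : T w ≠ 0 → 2 * r ≤ sin (angle (T w) v))
    (hlip : ∀ᶠ t in 𝓝[>] (0 : ℝ),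
      sin (angle (T (v + t • w)) v) ≤ ε * sin (angle (v + t • w) v)) :
    2 * r * ‖T w‖ ≤ ε * |c| * ‖w‖ := by
  set h := T w
  have key : ∀ᶠ t in 𝓝[>] (0 : ℝ),
      sin (angle h v) * ‖h‖ * ‖v + t • w‖ ≤ ε * ‖w‖ * ‖c • v + t • h‖ := by
    filter_upwards [hlip, self_mem_nhdsWithin] with t hlip (ht : 0 < t)
    rw [map_add, map_smul, hTv] at hlip
    have hy : sin (angle (c • v + t • h) v) * ‖c • v + t • h‖ = t * (sin (angle h v) * ‖h‖) := by
      rw [add_comm, sin_angle_add_smul_mul_norm, sin_angle_smul_left ht.ne', norm_smul,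
        Real.norm_of_nonneg ht.le]
      ring
    have hx : sin (angle (v + t • w) v) * ‖v + t • w‖ ≤ t * ‖w‖ := by
      rw [show v + t • w = t • w + (1 : ℝ) • v by rw [one_smul, add_comm],
        sin_angle_add_smul_mul_norm, sin_angle_smul_left ht.ne', norm_smul,
        Real.norm_of_nonneg ht.le]
      exact mul_le_of_le_one_left (by positivity) (sin_le_one _)
    refine le_of_mul_le_mul_left ?_ ht
    calc t * (sin (angle h v) * ‖h‖ * ‖v + t • w‖)
        = sin (angle (c • v + t • h) v) * ‖c • v + t • h‖ * ‖v + t • w‖ := by rw [hy]; ring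
      _ ≤ ε * sin (angle (v + t • w) v) * ‖c • v + t • h‖ * ‖v + t • w‖ := by gcongr
      _ = ε * (sin (angle (v + t • w) v) * ‖v + t • w‖) * ‖c • v + t • h‖ := by ring
      _ ≤ ε * (t * ‖w‖) * ‖c • v + t • h‖ := by gcongr
      _ = t * (ε * ‖w‖ * ‖c • v + t • h‖) := by ring
  have hcont (a b : E) : Tendsto (fun t : ℝ => ‖a + t • b‖) (𝓝[>] 0) (𝓝 ‖a‖) := by
    have hc : Continuous fun t : ℝ => ‖a + t • b‖ := by fun_prop
    simpa using (hc.tendsto 0).mono_left nhdsWithin_le_nhds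
  have hlim := le_of_tendsto_of_tendsto ((hcont v w).const_mul _) ((hcont _ h).const_mul _) key
  rw [norm_smul, Real.norm_eq_abs, ← mul_assoc] at hlim
  have hsin : sin (angle h v) * ‖h‖ ≤ ε * ‖w‖ * |c| :=
    le_of_mul_le_mul_right hlim (norm_pos_iff.2 hv)
  by_cases h0 : h = 0
  · rw [h0, norm_zero, mul_zero]; positivity
  · nlinarith [hsep h0, norm_nonneg h]

lemma opNorm_le_of_inner_normal {T : E →L[ℝ] E} {n v : E} {c r : ℝ} (hr : 0 < r)
    (h2r : 2 * r ≤ 1) (hn : ‖n‖ = 1) (hv : v ≠ 0) (hTv : T v = c • v)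
    (hnv : 2 * r * ‖v‖ ≤ |⟪n, v⟫|) (hcontr : ∀ w, ⟪n, w⟫ = 0 → ‖T w‖ ≤ |c| / 2 * ‖w‖) :
    ‖T‖ ≤ |c| / (2 * r ^ 2) := by
  have hnv0 : ⟪n, v⟫ ≠ 0 := fun h0 => by
    rw [h0, abs_zero] at hnv; have := norm_pos_iff.2 hv; nlinarith
  refine T.opNorm_le_bound (by positivity) fun u => ?_
  set a := ⟪n, u⟫ / ⟪n, v⟫
  set w := u - a • v
  have hw : ⟪n, w⟫ = 0 := by
    simp only [w, a, inner_sub_right, real_inner_smul_right]; field_simp; ring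
  have hav : 2 * r * ‖a • v‖ ≤ ‖u‖ := by
    have hu := abs_real_inner_le_norm n u
    rw [hn, one_mul] at hu
    calc 2 * r * ‖a • v‖ = |a| * (2 * r * ‖v‖) := by rw [norm_smul, Real.norm_eq_abs]; ring
      _ ≤ |a| * |⟪n, v⟫| := by gcongr
      _ = |⟪n, u⟫| := by rw [← abs_mul, div_mul_cancel₀ _ hnv0]
      _ ≤ ‖u‖ := hu
  have hwu : ‖w‖ ≤ ‖u‖ + ‖a • v‖ := norm_sub_le _ _
  have hTu : ‖T u‖ ≤ |c| * ‖a • v‖ + |c| / 2 * ‖w‖ := by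
    have : T u = c • a • v + T w := by
      rw [smul_comm, ← hTv, ← map_smul, ← map_add, add_sub_cancel]
    rw [this]
    refine (norm_add_le _ _).trans (add_le_add (le_of_eq ?_) (hcontr w hw))
    rw [norm_smul, Real.norm_eq_abs]
  rw [div_mul_eq_mul_div, le_div_iff₀ (by positivity)]
  calc ‖T u‖ * (2 * r ^ 2) ≤ (|c| * ‖a • v‖ + |c| / 2 * (‖u‖ + ‖a • v‖)) * (2 * r ^ 2) := by
        gcongr; exact hTu.trans (by gcongr)
    _ = |c| * (3 * r / 2 * (2 * r * ‖a • v‖) + r ^ 2 * ‖u‖) := by ring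
    _ ≤ |c| * (3 * r / 2 * ‖u‖ + r ^ 2 * ‖u‖) := by gcongr
    _ ≤ |c| * ‖u‖ := by
        have hr2 : 3 * r / 2 + r ^ 2 ≤ 1 := by nlinarith
        gcongr; nlinarith [mul_le_mul_of_nonneg_right hr2 (norm_nonneg u)]


lemma exists_unit_normal_of_finrank_add_one_eq [FiniteDimensional ℝ E] {K : Submodule ℝ E}
    (hK : Module.finrank ℝ K + 1 = Module.finrank ℝ E) :
    ∃ n : E, ‖n‖ = 1 ∧ ∀ x, x ∈ K ↔ ⟪n, x⟫ = 0 := by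
  have hKo : Module.finrank ℝ Kᗮ = 1 := by
    have := K.finrank_add_finrank_orthogonal; omega
  obtain ⟨ψ, hψK, hψ0⟩ := Submodule.exists_mem_ne_zero_of_ne_bot (p := Kᗮ)
    (fun h => by rw [h, finrank_bot] at hKo; omega)
  set n := ‖ψ‖⁻¹ • ψ
  have hn0 : n ≠ 0 := smul_ne_zero (inv_ne_zero (norm_ne_zero_iff.2 hψ0)) hψ0
  have hspan : (ℝ ∙ n) = Kᗮ := Submodule.eq_of_le_of_finrank_le
    ((Submodule.span_singleton_le_iff_mem _ _).2 (Kᗮ.smul_mem _ hψK))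
    (by rw [hKo, finrank_span_singleton hn0])
  refine ⟨n, norm_smul_inv_norm hψ0, fun x => ?_⟩
  rw [← K.orthogonal_orthogonal, ← hspan, Submodule.mem_orthogonal_singleton_iff_inner_right]

end InnerProductSpace

open scoped LinearAlgebra.Projectivization
open Projectivization

section Projective

variable {d : ℕ}

local notation "V" => EuclideanSpace ℝ (Fin d)

lemma dproj_eq_sin_angle (x y : ℙ ℝ V) : dproj x y = sin (angle x.rep y.rep) := by
  rw [dproj, angle, sin_arccos]

lemma dproj_mk {a b : V} (ha : a ≠ 0) (hb : b ≠ 0) :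
    dproj (mk ℝ a ha) (mk ℝ b hb) = sin (angle a b) := by
  obtain ⟨s, hs⟩ := exists_smul_eq_mk_rep ℝ a ha
  obtain ⟨t, ht⟩ := exists_smul_eq_mk_rep ℝ b hb
  rw [dproj_eq_sin_angle, ← hs, ← ht, Units.smul_def, Units.smul_def,
    sin_angle_smul_left s.ne_zero, sin_angle_smul_right t.ne_zero]

lemma mk_submodule_le_iff {a : V} (ha : a ≠ 0) {K : Submodule ℝ V} :
    (mk ℝ a ha).submodule ≤ K ↔ a ∈ K := by
  rw [submodule_mk, Submodule.span_singleton_le_iff_mem]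

lemma projAct_mk (g : V ≃L[ℝ] V) {a : V} (ha : a ≠ 0) :
    projAct g (mk ℝ a ha) = mk ℝ (g a) ((map_ne_zero_iff g g.injective).2 ha) := rfl

lemma exists_eq_smul_of_projAct_eq (g : V ≃L[ℝ] V) {v : V} (hv : v ≠ 0)
    (h : projAct g (mk ℝ v hv) = mk ℝ v hv) : ∃ c : ℝ, c ≠ 0 ∧ g v = c • v := by
  obtain ⟨c, hc⟩ := (mk_eq_mk_iff ℝ _ _ _ _).1 ((projAct_mk g hv).symm.trans h)
  exact ⟨c, c.ne_zero, by rw [← hc, Units.smul_def]⟩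

lemma mul_norm_le_abs_inner_of_le_dproj {n v : V} {K : Submodule ℝ V} (hv : v ≠ 0)
    (hn : ‖n‖ = 1) (hK : ∀ x, x ∈ K ↔ ⟪n, x⟫ = 0) (hKbot : K ≠ ⊥) {r : ℝ}
    (hsep : ∀ z : ℙ ℝ V, z.submodule ≤ K → r ≤ dproj (mk ℝ v hv) z) :
    r * ‖v‖ ≤ |⟪n, v⟫| := by
  obtain ⟨z₀, hz₀K, hz₀⟩ := K.exists_mem_ne_zero_of_ne_bot hKbot
  obtain ⟨z, hz0, hzK, hz⟩ := exists_sin_angle_mul_norm_eq hn ((hK z₀).1 hz₀K) hz₀ v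
  have hrz := hsep (mk ℝ z hz0) ((mk_submodule_le_iff hz0).2 ((hK z).2 hzK))
  rw [dproj_mk] at hrz
  rw [← hz]
  exact mul_le_mul_of_nonneg_right hrz (norm_nonneg v)

lemma le_dproj_of_mul_norm_le_abs_inner {n a : V} {K : Submodule ℝ V} (ha : a ≠ 0)
    (hn : ‖n‖ = 1) (hK : ∀ x, x ∈ K ↔ ⟪n, x⟫ = 0) {ε : ℝ} (hεa : ε * ‖a‖ ≤ |⟪n, a⟫|) :
    ∀ z : ℙ ℝ V, z.submodule ≤ K → ε ≤ dproj (mk ℝ a ha) z := by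
  intro z hz
  have hzK : z.rep ∈ K := hz (by rw [submodule_eq]; exact Submodule.mem_span_singleton_self _)
  rw [← mk_rep z, dproj_mk]
  have := hεa.trans (abs_inner_le_sin_angle_mul_norm hn ((hK _).1 hzK) z.rep_nonzero a)
  exact le_of_mul_le_mul_right this (norm_pos_iff.2 ha)

lemma eventually_sin_angle_apply_le_of_dproj_lipschitz (g : V ≃L[ℝ] V) {n v : V}
    {K : Submodule ℝ V} (hv : v ≠ 0) (hn : ‖n‖ = 1) (hK : ∀ x, x ∈ K ↔ ⟪n, x⟫ = 0) {c ε : ℝ}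
    (hε : 0 < ε) (hc : c ≠ 0) (hgv : g v = c • v) (hnv : 2 * ε * ‖v‖ ≤ |⟪n, v⟫|)
    (hlip : ∀ x y : ℙ ℝ V, (∀ z, z.submodule ≤ K → ε ≤ dproj x z) →
      (∀ z, z.submodule ≤ K → ε ≤ dproj y z) →
      dproj (projAct g x) (projAct g y) ≤ ε * dproj x y)
    {w : V} (hw : w ∈ K) :
    ∀ᶠ t in 𝓝[>] (0 : ℝ), sin (angle (g (v + t • w)) v) ≤ ε * sin (angle (v + t • w) v) := by
  have hv' : 0 < ‖v‖ := norm_pos_iff.2 hv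
  have hsmall : ∀ᶠ t in 𝓝[>] (0 : ℝ), t * ‖w‖ ≤ ‖v‖ := by
    have hcont : Continuous fun t : ℝ => t * ‖w‖ := by fun_prop
    exact ((hcont.tendsto 0).mono_left nhdsWithin_le_nhds).eventually_le_const (by simpa using hv')
  filter_upwards [hsmall, self_mem_nhdsWithin] with t ht (ht0 : 0 < t)
  have hinner : ⟪n, v + t • w⟫ = ⟪n, v⟫ := by
    rw [inner_add_right, real_inner_smul_right, (hK w).1 hw, mul_zero, add_zero]
  have hεv : ε * ‖v‖ ≤ |⟪n, v⟫| := by nlinarith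
  have hx : ε * ‖v + t • w‖ ≤ |⟪n, v + t • w⟫| := by
    have : ‖v + t • w‖ ≤ 2 * ‖v‖ := by
      refine (norm_add_le _ _).trans ?_
      rw [norm_smul, Real.norm_of_nonneg ht0.le]
      linarith
    rw [hinner]
    nlinarith
  have hx0 : v + t • w ≠ 0 := fun h0 => by
    rw [h0, inner_zero_right, eq_comm] at hinner
    rw [hinner, abs_zero] at hnv
    nlinarith
  have := hlip _ _ (le_dproj_of_mul_norm_le_abs_inner hx0 hn hK hx)
    (le_dproj_of_mul_norm_le_abs_inner hv hn hK hεv)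
  rwa [projAct_mk, projAct_mk, dproj_mk, dproj_mk, hgv, sin_angle_smul_right hc] at this

lemma norm_apply_le_of_dproj_lipschitz (g : V ≃L[ℝ] V) {n v : V} {K : Submodule ℝ V}
    (hv : v ≠ 0) (hn : ‖n‖ = 1) (hK : ∀ x, x ∈ K ↔ ⟪n, x⟫ = 0) {c r ε : ℝ} (hε : 0 < ε)
    (hεr : ε ≤ r) (hc : c ≠ 0) (hgv : g v = c • v) (hnv : 2 * r * ‖v‖ ≤ |⟪n, v⟫|)
    (hsep : ∀ z : ℙ ℝ V, z.submodule ≤ K → 2 * r ≤ dproj (mk ℝ v hv) z)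
    (hlip : ∀ x y : ℙ ℝ V, (∀ z, z.submodule ≤ K → ε ≤ dproj x z) →
      (∀ z, z.submodule ≤ K → ε ≤ dproj y z) →
      dproj (projAct g x) (projAct g y) ≤ ε * dproj x y)
    {w : V} (hw : w ∈ K) (hgw : g w ∈ K) : ‖g w‖ ≤ |c| / 2 * ‖w‖ := by
  have hr : 0 < r := hε.trans_le hεr
  have hsep' : g w ≠ 0 → 2 * r ≤ sin (angle (g w) v) := fun h0 => by
    have := hsep (mk ℝ (g w) h0) ((mk_submodule_le_iff h0).2 hgw)
    rwa [dproj_mk, angle_comm] at this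
  have hεv : 2 * ε * ‖v‖ ≤ |⟪n, v⟫| :=
    le_trans (by gcongr) hnv
  have key := mul_norm_apply_le_of_sin_angle_le (T := g.toLinearEquiv.toLinearMap) hε.le hv hgv
    hsep' (eventually_sin_angle_apply_le_of_dproj_lipschitz g hv hn hK hε hc hgv hεv hlip hw)
  change 2 * r * ‖g w‖ ≤ ε * |c| * ‖w‖ at key
  nlinarith [mul_le_mul_of_nonneg_right hεr (mul_nonneg (abs_nonneg c) (norm_nonneg w))]

lemma log_abs_le_lambda1_and_lambda1_le_mu1 (g : V ≃L[ℝ] V) {v : V} (hv : v ≠ 0) {c : ℝ}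
    (hc : c ≠ 0) (hgv : g v = c • v) : log |c| ≤ lambda1 g ∧ lambda1 g ≤ mu1 g := by
  refine liminf_mem_Icc_of_eventually_mem (eventually_atTop.2 ⟨1, fun k hk => ?_⟩)
  have hk' : (0 : ℝ) < k := by exact_mod_cast hk
  have hlow := abs_le_opNorm_of_apply_eq_smul hv
    (pow_apply_eq_pow_smul (T := (g : V →L[ℝ] V)) hgv k)
  rw [abs_pow] at hlow
  have hpos : 0 < |c| ^ k := by positivity
  rw [Set.mem_Icc, ContinuousLinearEquiv.coe_pow, mu1, le_div_iff₀ hk', div_le_iff₀ hk',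
    mul_comm, ← log_pow, mul_comm, ← log_pow]
  exact ⟨log_le_log hpos hlow, log_le_log (hpos.trans_le hlow) (norm_pow_le' _ (by omega))⟩

end Projective

theorem stmt14_general (d : ℕ) (hd : 2 ≤ d) (r ε : ℝ) (hε : 0 < ε) (hεr : ε ≤ r)
    (g : EuclideanSpace ℝ (Fin d) ≃L[ℝ] EuclideanSpace ℝ (Fin d))
    (xplus : Projectivization ℝ (EuclideanSpace ℝ (Fin d)))
    (Xm : Submodule ℝ (EuclideanSpace ℝ (Fin d)))
    -- g is proximal with attracting fixed point xplus and repelling hyperplane Xm: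
    (hXrank : Module.finrank ℝ Xm = d - 1)
    (hfix : projAct g xplus = xplus)
    (hinv : ∀ v : EuclideanSpace ℝ (Fin d), v ∈ Xm → g v ∈ Xm)
    -- and (r,ε)-proximal:
    (hsep : ∀ z : Projectivization ℝ (EuclideanSpace ℝ (Fin d)),
      z.submodule ≤ Xm → 2 * r ≤ dproj xplus z)
    (hlip : ∀ x y : Projectivization ℝ (EuclideanSpace ℝ (Fin d)),
      (∀ z, z.submodule ≤ Xm → ε ≤ dproj x z) →
      (∀ z, z.submodule ≤ Xm → ε ≤ dproj y z) →
      dproj (projAct g x) (projAct g y) ≤ ε * dproj x y) :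
    mu1 g - |Real.log (2 * r ^ 2)| ≤ lambda1 g ∧ lambda1 g ≤ mu1 g := by
  have hr : 0 < r := hε.trans_le hεr
  obtain ⟨n, hn, hXm⟩ := exists_unit_normal_of_finrank_add_one_eq (K := Xm)
    (by rw [hXrank, finrank_euclideanSpace_fin]; omega)
  have hXm_ne_bot : Xm ≠ ⊥ := fun h => by rw [h, finrank_bot] at hXrank; omega
  obtain ⟨v, hv, rfl⟩ : ∃ v hv, mk ℝ v hv = xplus := ⟨_, _, mk_rep xplus⟩
  obtain ⟨c, hc, hgv⟩ := exists_eq_smul_of_projAct_eq g hv hfix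
  have hnv := mul_norm_le_abs_inner_of_le_dproj hv hn hXm hXm_ne_bot hsep
  have h2r : 2 * r ≤ 1 := le_of_mul_le_mul_right
    (by simpa [hn] using hnv.trans (abs_real_inner_le_norm n v)) (norm_pos_iff.2 hv)
  have hnorm := opNorm_le_of_inner_normal (T := g.toContinuousLinearMap) hr h2r hn hv hgv hnv
    fun w hw => norm_apply_le_of_dproj_lipschitz g hv hn hXm hε hεr hc hgv hnv hsep hlip
      ((hXm w).2 hw) (hinv w ((hXm w).2 hw))
  obtain ⟨hlow, hup⟩ := log_abs_le_lambda1_and_lambda1_le_mu1 g hv hc hgv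
  have h2r2 : 0 < 2 * r ^ 2 := by positivity
  have hmu : mu1 g ≤ log |c| - log (2 * r ^ 2) := by
    rw [mu1, ← log_div (abs_ne_zero.2 hc) h2r2.ne']
    exact log_le_log ((abs_pos.2 hc).trans_le (abs_le_opNorm_of_apply_eq_smul hv hgv)) hnorm
  rw [abs_of_nonpos (log_nonpos h2r2.le (by nlinarith))]
  exact ⟨by linarith, hup⟩

/-- Corollary 2.5: if `g` is `(r,ε)`-proximal in `ℙ(V)`, then
`μ₁(g) − |log 2r²| ≤ λ₁(g) ≤ μ₁(g)`. -/
theorem stmt14 (d : ℕ) (hd : 2 ≤ d) (r ε : ℝ) (hε : 0 < ε) (hεr : ε ≤ r)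
    (g : EuclideanSpace ℝ (Fin d) ≃L[ℝ] EuclideanSpace ℝ (Fin d))
    (xplus : Projectivization ℝ (EuclideanSpace ℝ (Fin d)))
    (Xm : Submodule ℝ (EuclideanSpace ℝ (Fin d)))
    -- g is proximal with attracting fixed point xplus and repelling hyperplane Xm:
    (hXrank : Module.finrank ℝ Xm = d - 1)
    (hfix : projAct g xplus = xplus)
    (hinv : ∀ v : EuclideanSpace ℝ (Fin d), v ∈ Xm → g v ∈ Xm)
    (hattract : ∀ y : Projectivization ℝ (EuclideanSpace ℝ (Fin d)), ¬ y.submodule ≤ Xm →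
      Filter.Tendsto (fun n : ℕ => dproj ((projAct g)^[n] y) xplus)
        Filter.atTop (nhds 0))
    -- and (r,ε)-proximal:
    (hsep : ∀ z : Projectivization ℝ (EuclideanSpace ℝ (Fin d)),
      z.submodule ≤ Xm → 2 * r ≤ dproj xplus z)
    (hmap : ∀ x : Projectivization ℝ (EuclideanSpace ℝ (Fin d)),
      (∀ z, z.submodule ≤ Xm → ε ≤ dproj x z) → dproj (projAct g x) xplus ≤ ε)
    (hlip : ∀ x y : Projectivization ℝ (EuclideanSpace ℝ (Fin d)),
      (∀ z, z.submodule ≤ Xm → ε ≤ dproj x z) →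
      (∀ z, z.submodule ≤ Xm → ε ≤ dproj y z) →
      dproj (projAct g x) (projAct g y) ≤ ε * dproj x y) :
    mu1 g - |Real.log (2 * r ^ 2)| ≤ lambda1 g ∧ lambda1 g ≤ mu1 g :=
  stmt14_general d hd r ε hε hεr g xplus Xm hXrank hfix hinv hsep hlip
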